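/- arXiv:1310.2378 — 2 statements merged into one kernel-verified Lean document; each statement's English description precedes it below -/
import Mathlib

section
/- Let T be a tree whose edge set is partitioned into κ ≥ 2 nonempty parts E_1,...,E_κ, each of which induces a subtree of T. Then some part E_h is 'extremal': at most one vertex of T is incident both to an edge of E_h and to an edge of some other part. -/
/-!
Write `S i` for the vertex set of the class `P i`. Since `P i` spans a subtree,
`|S i| = |P i| + 1`, hence `∑ |S i| = |E(T)| + κ = |V| + κ - 1`. A vertex lying in `m ≥ 2`
classes is rich in each of them, so it contributes `m ≤ 2 (m - 1)` to the total number of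
(class, rich vertex) incidences; summing, these are at most `2 (∑ |S i| - |V|) = 2 (κ - 1)`,
so some class has at most one rich vertex.
-/

open Finset

theorem Finset.one_lt_card_iff_exists_ne {α : Type*} {s : Finset α} {a : α} (ha : a ∈ s) :
    1 < #s ↔ ∃ b ∈ s, b ≠ a :=
  ⟨fun hs => exists_mem_ne hs a, fun ⟨b, hb, hba⟩ => one_lt_card.mpr ⟨b, hb, a, ha, hba⟩⟩

section SetFamily

variable {V ι : Type*}

def sharedVerts (S : ι → Set V) (i : ι) : Set V :=
  {v | v ∈ S i ∧ ∃ j, j ≠ i ∧ v ∈ S j}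

open scoped Classical

variable [Fintype ι]

theorem card_filter_mem_sharedVerts_add_two_le (S : ι → Set V) {v : V} (hv : ∃ i, v ∈ S i) :
    #{i | v ∈ sharedVerts S i} + 2 ≤ 2 * #{i | v ∈ S i} := by
  have hsub : ({i | v ∈ sharedVerts S i} : Finset ι) ⊆ ({i | v ∈ S i} : Finset ι) :=
    monotone_filter_right _ fun _ _ => And.left
  rcases eq_empty_or_nonempty ({i | v ∈ sharedVerts S i} : Finset ι) with hempty | ⟨i, hi⟩
  · obtain ⟨i, hi⟩ := hv
    have hpos : 0 < #{i | v ∈ S i} := card_pos.mpr ⟨i, by simpa using hi⟩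
    rw [hempty, card_empty]
    omega
  · obtain ⟨hvi, j, hji, hvj⟩ := (mem_filter.mp hi).2
    have hmult : 1 < #{i | v ∈ S i} :=
      (one_lt_card_iff_exists_ne (a := i) (by simpa using hvi)).mpr ⟨j, by simpa using hvj, hji⟩
    have hle := card_le_card hsub
    omega

theorem sum_ncard_eq_sum_card_filter_mem [Fintype V] (A : ι → Set V) :
    ∑ i, (A i).ncard = ∑ v, #{i | v ∈ A i} := by
  refine (sum_congr rfl fun i _ => ?_).trans
    (sum_card_bipartiteAbove_eq_sum_card_bipartiteBelow (r := fun i v => v ∈ A i))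
  rw [← Set.ncard_coe_finset, coe_bipartiteAbove]
  simp

theorem sum_ncard_sharedVerts_add_two_mul_card_le [Fintype V] (S : ι → Set V) (hcover : ∀ v, ∃ i, v ∈ S i) :
    ∑ i, (sharedVerts S i).ncard + 2 * Fintype.card V ≤ 2 * ∑ i, (S i).ncard := by
  rw [sum_ncard_eq_sum_card_filter_mem, sum_ncard_eq_sum_card_filter_mem, mul_sum, ← card_univ,
    mul_comm, ← smul_eq_mul, ← sum_const, ← sum_add_distrib]
  exact sum_le_sum fun v _ => card_filter_mem_sharedVerts_add_two_le S (hcover v)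

theorem exists_subsingleton_sharedVerts_of_sum_ncard_le [Finite V] (S : ι → Set V)
    (hcover : ∀ v, ∃ i, v ∈ S i) (hsum : ∑ i, (S i).ncard + 1 ≤ Nat.card V + Fintype.card ι) :
    ∃ i, (sharedVerts S i).Subsingleton := by
  have := Fintype.ofFinite V
  by_contra! hshared
  have hlower : 2 * Fintype.card ι ≤ ∑ i, (sharedVerts S i).ncard := by
    rw [mul_comm, ← smul_eq_mul, ← card_univ]
    exact card_nsmul_le_sum _ _ _ fun i _ => Set.one_lt_ncard_iff_nontrivial.mpr (hshared i)
  have hupper := sum_ncard_sharedVerts_add_two_mul_card_le S hcover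
  rw [Nat.card_eq_fintype_card] at hsum
  omega

end SetFamily

namespace SimpleGraph

variable {V : Type*} {G : SimpleGraph V}

theorem Preconnected.exists_mem_edgeSet (hG : G.Preconnected) (hE : G.edgeSet.Nonempty) (v : V) :
    ∃ e ∈ G.edgeSet, v ∈ e := by
  obtain ⟨⟨a, b⟩, hab⟩ := hE
  have : Nontrivial V := ⟨a, b, G.ne_of_adj hab⟩
  obtain ⟨u, hvu⟩ := hG.exists_adj_of_nontrivial v
  exact ⟨s(v, u), hvu, Sym2.mem_mk_left v u⟩

theorem image_val_edgeSet_induce_fromEdgeSet {P : Set (Sym2 V)} (hP : ∀ e ∈ P, ¬e.IsDiag) :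
    Sym2.map Subtype.val '' ((fromEdgeSet P).induce {v | ∃ e ∈ P, v ∈ e}).edgeSet = P := by
  ext e
  constructor
  · rintro ⟨e', he', rfl⟩
    induction e' using Sym2.ind with
    | h x y => simpa using he'.1
  · intro he
    induction e using Sym2.ind with
    | h a b =>
      refine ⟨s(⟨a, _, he, Sym2.mem_mk_left a b⟩, ⟨b, _, he, Sym2.mem_mk_right a b⟩), ?_, rfl⟩
      simpa using ⟨he, hP _ he⟩

theorem IsAcyclic.ncard_verts_eq_ncard_add_one [Finite V] (hG : G.IsAcyclic) {P : Set (Sym2 V)}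
    (hP : P ⊆ G.edgeSet) (hconn : ((fromEdgeSet P).induce {v | ∃ e ∈ P, v ∈ e}).Connected) :
    {v | ∃ e ∈ P, v ∈ e}.ncard = P.ncard + 1 := by
  have hle : fromEdgeSet P ≤ G := (fromEdgeSet_le G).mpr (Set.sdiff_subset.trans hP)
  have htree := (isTree_iff_connected_and_card.mp ⟨hconn, (hG.anti hle).induce _⟩).2
  rwa [Nat.card_coe_set_eq, Nat.card_coe_set_eq, ← Set.ncard_image_of_injective _
    (Sym2.map.injective Subtype.val_injective),
    image_val_edgeSet_induce_fromEdgeSet fun e he => G.not_isDiag_of_mem_edgeSet (hP he),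
    eq_comm] at htree

end SimpleGraph

/-- Let `T` be a tree whose edge set is partitioned into `κ ≥ 2` nonempty parts
`P 0, …, P (κ-1)`, each inducing a subtree of `T`. Then some part `P h` is
extremal: at most one vertex of `T` is incident both to an edge of `P h` and to
an edge of another part. -/
theorem exists_extremal_edge_class
    {V : Type*} [Fintype V] (T : SimpleGraph V)
    (hconn : T.Connected) (hacyc : T.IsAcyclic)
    (κ : ℕ) (hκ : 2 ≤ κ) (P : Fin κ → Set (Sym2 V))
    (hne : ∀ i, (P i).Nonempty)
    (hdisj : Pairwise fun i j => Disjoint (P i) (P j))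
    (hcover : (⋃ i, P i) = T.edgeSet)
    (hsub : ∀ i, ((SimpleGraph.fromEdgeSet (P i)).induce
      {v : V | ∃ e ∈ P i, v ∈ e}).Connected) :
    ∃ h : Fin κ, {v : V | (∃ e ∈ P h, v ∈ e) ∧
      ∃ i : Fin κ, i ≠ h ∧ ∃ e ∈ P i, v ∈ e}.Subsingleton := by
  have hPT (i : Fin κ) : P i ⊆ T.edgeSet := hcover ▸ Set.subset_iUnion P i
  refine exists_subsingleton_sharedVerts_of_sum_ncard_le (fun i => {v | ∃ e ∈ P i, v ∈ e}) ?_ ?_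
  · intro v
    have hE : T.edgeSet.Nonempty := (hne ⟨0, by omega⟩).mono (hPT _)
    obtain ⟨e, he, hve⟩ := hconn.preconnected.exists_mem_edgeSet hE v
    rw [← hcover] at he
    obtain ⟨i, hi⟩ := Set.mem_iUnion.mp he
    exact ⟨i, e, hi, hve⟩
  · have hedges : T.edgeSet.ncard = ∑ i, (P i).ncard := by
      rw [← hcover, Set.ncard_iUnion_of_finite (fun _ => Set.toFinite _) hdisj,
        finsum_eq_sum_of_fintype]
    have htree : T.edgeSet.ncard + 1 = Nat.card V := by
      rw [← Nat.card_coe_set_eq]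
      exact (SimpleGraph.isTree_iff_connected_and_card.mp ⟨hconn, hacyc⟩).2
    simp only [hacyc.ncard_verts_eq_ncard_add_one (hPT _) (hsub _), sum_add_distrib, ← hedges,
      sum_const, card_univ, Fintype.card_fin, smul_eq_mul, mul_one]
    omega
end

section
/- Let T be a tree whose edges are partitioned into κ subtrees E_1,...,E_κ. Then the number of rich vertices (vertices incident to edges of more than one class) is at most κ − 1. -/
/-!
Each part `P i` spans a subtree, so it touches `|P i| + 1` vertices; summing over the parts,
`∑ i, |V(P i)| = |E(T)| + κ = |V| - 1 + κ`. On the other hand every vertex lies in some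
`V(P i)` and every rich vertex in at least two, so the same sum is at least `|V| + #rich`.
-/

open SimpleGraph Set Finset

namespace SimpleGraph

variable {V : Type*}

theorem image_edgeSet_induce_of_support_subset {G : SimpleGraph V} {s : Set V}
    (h : G.support ⊆ s) : Sym2.map (↑) '' (G.induce s).edgeSet = G.edgeSet := by
  conv_rhs => rw [← (G.spanningCoe_induce_eq_self s).2 h]
  rw [edgeSet_map]
  rfl

theorem ncard_add_one_eq_ncard_verts_of_isTree [Finite V] {Q : Set (Sym2 V)}
    (hQ : Disjoint Q Sym2.diagSet)
    (h : ((fromEdgeSet Q).induce {v | ∃ e ∈ Q, v ∈ e}).IsTree) :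
    Q.ncard + 1 = {v | ∃ e ∈ Q, v ∈ e}.ncard := by
  have hsupp : (fromEdgeSet Q).support ⊆ {v | ∃ e ∈ Q, v ∈ e} :=
    fun v ⟨w, hvw⟩ => ⟨s(v, w), ((fromEdgeSet_adj _).1 hvw).1, Sym2.mem_mk_left v w⟩
  have hcard := (isTree_iff_connected_and_card.1 h).2
  rwa [Nat.card_coe_set_eq, Nat.card_coe_set_eq,
    ← ncard_image_of_injective _ (Sym2.map.injective Subtype.val_injective),
    image_edgeSet_induce_of_support_subset hsupp, edgeSet_fromEdgeSet, sdiff_eq_left.2 hQ] at hcard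

end SimpleGraph

theorem Set.natCard_add_ncard_mem_two_le_sum_ncard {ι α : Type*} [Fintype ι] [Finite α]
    (S : ι → Set α) (hS : ∀ a, ∃ i, a ∈ S i) :
    Nat.card α + {a | ∃ i j, i ≠ j ∧ a ∈ S i ∧ a ∈ S j}.ncard ≤ ∑ i, (S i).ncard := by
  classical
  have := Fintype.ofFinite α
  set R := {a | ∃ i j, i ≠ j ∧ a ∈ S i ∧ a ∈ S j}
  have hcount : ∀ s : Set α, s.ncard = ∑ a, if a ∈ s then 1 else 0 := fun s => by
    rw [ncard_eq_toFinset_card', ← Finset.card_filter]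
    congr 1
    ext
    simp
  have hmult : ∀ a, 1 + (if a ∈ R then 1 else 0) ≤ #{i | a ∈ S i} := by
    intro a
    split_ifs with hrich
    · obtain ⟨i, j, hij, hi, hj⟩ := hrich
      calc 1 + 1 = #{i, j} := (Finset.card_pair hij).symm
        _ ≤ #{i | a ∈ S i} := Finset.card_le_card (by intro k; aesop)
    · obtain ⟨i, hi⟩ := hS a
      exact Finset.card_pos.2 ⟨i, by simpa using hi⟩
  calc Nat.card α + R.ncard = ∑ a, (1 + if a ∈ R then 1 else 0) := by
        rw [hcount, Finset.sum_add_distrib, Finset.sum_const, Finset.card_univ, smul_eq_mul,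
          mul_one, Nat.card_eq_fintype_card]
        congr!
    _ ≤ ∑ a, #{i | a ∈ S i} := Finset.sum_le_sum fun a _ => hmult a
    _ = ∑ i, (S i).ncard := by
        simp_rw [hcount, Finset.card_filter]
        exact Finset.sum_comm

/-- Let `T` be a tree whose edge set is partitioned into `κ ≥ 1` nonempty parts
`P 0, …, P (κ-1)`, each inducing a subtree of `T`. Then the number of rich
vertices (vertices incident to edges of at least two distinct parts) is at most
`κ − 1`. -/
theorem rich_vertices_le_parts_sub_one
    {V : Type*} [Fintype V] (T : SimpleGraph V)
    (hconn : T.Connected) (hacyc : T.IsAcyclic)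
    (κ : ℕ) (hκ : 1 ≤ κ) (P : Fin κ → Set (Sym2 V))
    (hne : ∀ i, (P i).Nonempty)
    (hdisj : Pairwise fun i j => Disjoint (P i) (P j))
    (hcover : (⋃ i, P i) = T.edgeSet)
    (hsub : ∀ i, ((SimpleGraph.fromEdgeSet (P i)).induce
      {v : V | ∃ e ∈ P i, v ∈ e}).Connected) :
    {v : V | ∃ i j : Fin κ, i ≠ j ∧ (∃ e ∈ P i, v ∈ e) ∧
      ∃ e ∈ P j, v ∈ e}.ncard ≤ κ - 1 := by
  have hPT : ∀ i, P i ⊆ T.edgeSet := fun i => hcover ▸ subset_iUnion P i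
  have hparts : ∀ i, (P i).ncard + 1 = {v | ∃ e ∈ P i, v ∈ e}.ncard := fun i =>
    ncard_add_one_eq_ncard_verts_of_isTree
      (subset_compl_iff_disjoint_right.1 ((hPT i).trans T.edgeSet_subset_compl_diagSet))
      ⟨hsub i, (hacyc.anti ((fromEdgeSet_le T).2 (sdiff_subset.trans (hPT i)))).induce _⟩
  have hedges : ∑ i, (P i).ncard = Nat.card T.edgeSet := by
    rw [← finsum_eq_sum_of_fintype, ← ncard_iUnion_of_finite (fun i => toFinite _) hdisj, hcover,
      Nat.card_coe_set_eq]
  have htree : Nat.card T.edgeSet + 1 = Nat.card V :=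
    (isTree_iff_connected_and_card.1 ⟨hconn, hacyc⟩).2
  have hcovered : ∀ v, ∃ i, ∃ e ∈ P i, v ∈ e := by
    obtain ⟨e₀, he₀⟩ := hne ⟨0, hκ⟩
    obtain ⟨a, b, hab⟩ := ne_bot_iff_exists_adj.1 (edgeSet_nonempty.1 ⟨e₀, hPT _ he₀⟩)
    have := hab.nontrivial
    intro v
    obtain ⟨w, hvw⟩ := hconn.preconnected.exists_adj_of_nontrivial v
    obtain ⟨i, hi⟩ := mem_iUnion.1 (hcover ▸ hvw : s(v, w) ∈ ⋃ i, P i)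
    exact ⟨i, s(v, w), hi, Sym2.mem_mk_left v w⟩
  have hdouble := natCard_add_ncard_mem_two_le_sum_ncard (fun i => {v | ∃ e ∈ P i, v ∈ e}) hcovered
  simp only [← hparts, sum_add_distrib, hedges, sum_const, card_univ, Fintype.card_fin,
    smul_eq_mul, mul_one, mem_ofPred_eq] at hdouble
  omega
end
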